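/- arXiv:1604.00431 — 5 statements merged into one kernel-verified Lean document; each statement's English description precedes it below -/
import Mathlib

section
/- Let A > 0, ω > 0, ρ ∈ (0,1), η ∈ ℝ, and let g : (0,∞) → ℝ be continuous with g(y)/y^ρ → 0 as y → 0⁺. Then there exist an integer M and a sequence (y_m)_{m ≥ M} of positive reals such that for each m ≥ M: y_m solves y_m = A·y_m^ρ·cos(ω·ln(1/y_m) + η) + g(y_m), the phase satisfies ω·ln(1/y_m) + η ∈ (mπ, (m+1)π), and moreover y_m·exp(mπ/ω) → exp((2η − π)/(2ω)) as m → ∞. -/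
/-!
Write the phase as `θ = ω log (1 / y) + η`, i.e. `y = exp ((η - θ) / ω)`. For `y > 0` the
equation becomes `A cos θ + f θ = 0` with `f θ = (g y - y) / y ^ ρ`, and `f θ → 0` as `θ → ∞`
because `g y = o(y ^ ρ)` and `y = o(y ^ ρ)` for `ρ < 1`. Once `|f| < A`, the function
`A cos θ + f θ` changes sign on every strip `[mπ, (m+1)π]`, giving a root `Θ m` there. Along these
roots `cos (Θ m) = -f (Θ m) / A → 0`, so `Θ m - mπ → π / 2`, which is the asymptotic
`y_m e^{mπ/ω} = exp ((η - (Θ m - mπ)) / ω) → exp ((η - π / 2) / ω)`.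
-/

open Filter Set Topology Real

lemma tendsto_sub_self_div_rpow_nhdsGT_zero {g : ℝ → ℝ} {ρ : ℝ} (hρ1 : ρ < 1)
    (hg0 : Tendsto (fun y => g y / y ^ ρ) (𝓝[>] 0) (𝓝 0)) :
    Tendsto (fun y => (g y - y) / y ^ ρ) (𝓝[>] 0) (𝓝 0) := by
  have hpow : Tendsto (fun y : ℝ => y ^ (1 - ρ)) (𝓝[>] 0) (𝓝 0) := by
    have h := (continuousAt_rpow_const 0 (1 - ρ) (Or.inr (by linarith))).tendsto
    rw [zero_rpow (by linarith)] at h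
    exact h.mono_left nhdsWithin_le_nhds
  have hsub := hg0.sub hpow
  rw [sub_zero] at hsub
  refine hsub.congr' ?_
  filter_upwards [self_mem_nhdsWithin] with y (hy : 0 < y)
  rw [rpow_sub hy, rpow_one, sub_div]

lemma exists_mul_cos_add_eq_zero_mem_Ioo {A T : ℝ} {f : ℝ → ℝ} (hf : ContinuousOn f (Ici T))
    (hfA : ∀ θ ≥ T, |f θ| < A) {m : ℤ} (hm : T ≤ m * π) :
    ∃ θ ∈ Ioo (m * π) ((m + 1) * π), A * cos θ + f θ = 0 := by
  -- `ε = cos (m π)`; after multiplying by it the sign change is from `+` at `mπ` to `-` at `(m+1)π`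
  set ε : ℝ := (-1) ^ m
  have hε : ε * ε = 1 := by rw [← mul_zpow]; norm_num
  have hεf (θ : ℝ) (hθ : T ≤ θ) : |ε * f θ| < A := by
    rw [abs_mul, abs_neg_one_zpow, one_mul]; exact hfA θ hθ
  have hab : (m : ℝ) * π ≤ (m + 1) * π := by nlinarith [pi_pos]
  have hG : ContinuousOn (fun θ => ε * (A * cos θ + f θ)) (Icc (m * π) ((m + 1) * π)) :=
    continuousOn_const.mul ((continuous_const.mul continuous_cos).continuousOn.add
      (hf.mono fun θ hθ => hm.trans hθ.1))
  have hGb : ε * (A * cos ((m + 1) * π) + f ((m + 1) * π)) < 0 := by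
    have hcos : cos ((m + 1) * π) = -ε := by rw [add_mul, one_mul, cos_add_pi, cos_int_mul_pi]
    have := (abs_lt.mp (hεf ((m + 1) * π) (hm.trans hab))).2
    rw [hcos]
    linear_combination this - A * hε
  have hGa : 0 < ε * (A * cos (m * π) + f (m * π)) := by
    have := (abs_lt.mp (hεf (m * π) hm)).1
    rw [cos_int_mul_pi]
    linear_combination this - A * hε
  obtain ⟨θ, hθ, hθ0⟩ := intermediate_value_Ioo' hab hG ⟨hGb, hGa⟩
  exact ⟨θ, hθ, (mul_eq_zero.mp hθ0).resolve_left (zpow_ne_zero m (by norm_num))⟩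

lemma tendsto_sub_int_mul_pi_of_tendsto_cos {Θ : ℤ → ℝ}
    (hΘ : ∀ᶠ m : ℤ in atTop, Θ m ∈ Icc (m * π) ((m + 1) * π))
    (hcos : Tendsto (fun m => cos (Θ m)) atTop (𝓝 0)) :
    Tendsto (fun m : ℤ => Θ m - m * π) atTop (𝓝 (π / 2)) := by
  have hcos' : Tendsto (fun m : ℤ => cos (Θ m - m * π)) atTop (𝓝 0) := by
    rw [tendsto_zero_iff_abs_tendsto_zero] at hcos ⊢
    refine hcos.congr fun m => ?_
    simp only [Function.comp_apply]
    rw [cos_sub_int_mul_pi, abs_mul, abs_neg_one_zpow, one_mul]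
  rw [← arccos_zero]
  refine (continuous_arccos.tendsto 0 |>.comp hcos').congr' ?_
  filter_upwards [hΘ] with m hm
  exact arccos_cos (by linarith [hm.1]) (by linarith [hm.2])

lemma tendsto_sub_int_mul_pi_of_mul_cos_add_eq_zero {A : ℝ} (hA : A ≠ 0) {f : ℝ → ℝ}
    (hf : Tendsto f atTop (𝓝 0)) {Θ : ℤ → ℝ}
    (hΘ : ∀ᶠ m : ℤ in atTop, Θ m ∈ Icc (m * π) ((m + 1) * π))
    (hΘ0 : ∀ᶠ m in atTop, A * cos (Θ m) + f (Θ m) = 0) :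
    Tendsto (fun m : ℤ => Θ m - m * π) atTop (𝓝 (π / 2)) := by
  have hΘ_atTop : Tendsto Θ atTop atTop := by
    refine tendsto_atTop_mono' _ ?_ (tendsto_intCast_atTop_atTop.atTop_mul_const pi_pos)
    filter_upwards [hΘ] with m hm using hm.1
  have hcos := ((hf.comp hΘ_atTop).div_const A).neg
  rw [zero_div, neg_zero] at hcos
  refine tendsto_sub_int_mul_pi_of_tendsto_cos hΘ (hcos.congr' ?_)
  filter_upwards [hΘ0] with m hm
  rw [Function.comp_apply, neg_eq_iff_eq_neg, div_eq_iff hA]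
  linear_combination hm

lemma log_one_div_exp_div {ω : ℝ} (hω : ω ≠ 0) (η θ : ℝ) :
    ω * log (1 / exp ((η - θ) / ω)) + η = θ := by
  rw [one_div, log_inv, log_exp]
  field_simp
  ring

lemma tendsto_exp_sub_div_atTop {ω : ℝ} (hω : 0 < ω) (η : ℝ) :
    Tendsto (fun θ => exp ((η - θ) / ω)) atTop (𝓝[>] 0) :=
  tendsto_exp_atBot_nhdsGT.comp
    ((tendsto_atBot_add_const_left _ η tendsto_neg_atTop_atBot).atBot_div_const hω)

lemma eq_mul_rpow_mul_add_iff {y A c ρ : ℝ} (hy : 0 < y) (g : ℝ → ℝ) :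
    y = A * y ^ ρ * c + g y ↔ A * c + (g y - y) / y ^ ρ = 0 := by
  have hyρ : y ^ ρ ≠ 0 := (rpow_pos_of_pos hy ρ).ne'
  have : A * c + (g y - y) / y ^ ρ = (A * y ^ ρ * c + g y - y) / y ^ ρ := by field_simp; ring
  rw [this, div_eq_zero_iff, or_iff_left hyρ, sub_eq_zero, eq_comm]

theorem stmt6_general (A ω ρ η : ℝ) (hA : 0 < A) (hω : 0 < ω) (hρ1 : ρ < 1)
    (g : ℝ → ℝ) (hg : ContinuousOn g (Set.Ioi 0))
    (hg0 : Filter.Tendsto (fun y => g y / y ^ ρ) (nhdsWithin 0 (Set.Ioi 0)) (nhds 0)) :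
    ∃ (M : ℤ) (y : ℤ → ℝ),
      (∀ m : ℤ, M ≤ m → 0 < y m ∧
        y m = A * y m ^ ρ * Real.cos (ω * Real.log (1 / y m) + η) + g (y m) ∧
        ω * Real.log (1 / y m) + η ∈
          Set.Ioo ((m : ℝ) * Real.pi) (((m : ℝ) + 1) * Real.pi)) ∧
      Filter.Tendsto (fun m : ℤ => y m * Real.exp ((m : ℝ) * Real.pi / ω)) Filter.atTop
        (nhds (Real.exp ((2 * η - Real.pi) / (2 * ω)))) := by
  set φ : ℝ → ℝ := fun θ => exp ((η - θ) / ω)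
  set f : ℝ → ℝ := fun θ => (g (φ θ) - φ θ) / φ θ ^ ρ
  have hφ : Continuous φ := by fun_prop
  have hf : Continuous f :=
    ((hg.comp_continuous hφ fun θ => exp_pos _).sub hφ).div
      (hφ.rpow_const fun θ => Or.inl (exp_pos _).ne') fun θ => (rpow_pos_of_pos (exp_pos _) ρ).ne'
  have hf0 : Tendsto f atTop (𝓝 0) :=
    (tendsto_sub_self_div_rpow_nhdsGT_zero hρ1 hg0).comp (tendsto_exp_sub_div_atTop hω η)
  obtain ⟨T, hT⟩ := eventually_atTop.mp (hf0.eventually (eventually_abs_sub_lt 0 hA))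
  have hM (m : ℤ) (hm : ⌈T / π⌉ ≤ m) : T ≤ m * π := (div_le_iff₀ pi_pos).mp (Int.ceil_le.mp hm)
  choose! Θ hΘ hΘ0 using fun m hm => exists_mul_cos_add_eq_zero_mem_Ioo hf.continuousOn
    (fun θ hθ => by simpa using hT θ hθ) (hM m hm)
  have hphase (θ : ℝ) : ω * log (1 / φ θ) + η = θ := log_one_div_exp_div hω.ne' η θ
  refine ⟨⌈T / π⌉, fun m => φ (Θ m), fun m hm => ⟨exp_pos _, ?_, ?_⟩, ?_⟩
  · rw [hphase, eq_mul_rpow_mul_add_iff (exp_pos _)]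
    exact hΘ0 m hm
  · rw [hphase]
    exact hΘ m hm
  have hev : ∀ᶠ m : ℤ in atTop, ⌈T / π⌉ ≤ m := eventually_ge_atTop _
  have hexp : Continuous fun s => exp ((η - s) / ω) := by fun_prop
  have hlim := (hexp.tendsto _).comp <| tendsto_sub_int_mul_pi_of_mul_cos_add_eq_zero hA.ne' hf0
    (hev.mono fun m hm => Ioo_subset_Icc_self (hΘ m hm)) (hev.mono hΘ0)
  rw [show (2 * η - π) / (2 * ω) = (η - π / 2) / ω by field_simp]
  refine hlim.congr fun m => ?_
  simp only [φ, Function.comp_apply, ← exp_add]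
  congr 1
  field_simp
  ring

/-- Asymptotics of the Shilnikov fixed points: solutions `y_m` in the strips
    `(mπ, (m+1)π)` satisfy `y_m · e^{mπ/ω} → e^{(2η-π)/(2ω)}`. -/
theorem stmt6 (A ω ρ η : ℝ) (hA : 0 < A) (hω : 0 < ω) (hρ0 : 0 < ρ) (hρ1 : ρ < 1)
    (g : ℝ → ℝ) (hg : ContinuousOn g (Set.Ioi 0))
    (hg0 : Filter.Tendsto (fun y => g y / y ^ ρ) (nhdsWithin 0 (Set.Ioi 0)) (nhds 0)) :
    ∃ (M : ℤ) (y : ℤ → ℝ),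
      (∀ m : ℤ, M ≤ m → 0 < y m ∧
        y m = A * y m ^ ρ * Real.cos (ω * Real.log (1 / y m) + η) + g (y m) ∧
        ω * Real.log (1 / y m) + η ∈
          Set.Ioo ((m : ℝ) * Real.pi) (((m : ℝ) + 1) * Real.pi)) ∧
      Filter.Tendsto (fun m : ℤ => y m * Real.exp ((m : ℝ) * Real.pi / ω)) Filter.atTop
        (nhds (Real.exp ((2 * η - Real.pi) / (2 * ω)))) :=
  stmt6_general A ω ρ η hA hω hρ1 g hg hg0
end

section
/- Let A, A₁, ω, ρ, η, η₁ be real numbers and define F : (0,∞) × ℝ → ℝ² by F(y, x) = (A·x·y^ρ·cos(ω·ln(1/y) + η), A₁·x·y^ρ·cos(ω·ln(1/y) + η₁)). Then F is differentiable at every point (y, x) with y > 0, and the determinant of its derivative equals ω·A·A₁·x·y^{2ρ−1}·sin(η − η₁). -/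
/-!
Write `F (y, x) = x • g y` with `g y = (u y, u₁ y)`, where `u`, `u₁` are the log-periodic
oscillations `a t^ρ cos (ω log (1/t) + η)`. The Jacobian of such a map is `x` times the Wronskian
`u' u₁ - u u₁'` of `g`. In the Wronskian the `ρ`-terms coming from `t^ρ` cancel, and the terms coming
from the phase combine into `ω a a₁ y^(2ρ-1) sin (η - η₁)`.
-/

open Real

theorem LinearMap.det_prod_self_eq {R : Type*} [CommRing R] (L : (R × R) →ₗ[R] (R × R)) :
    LinearMap.det L = (L (1, 0)).1 * (L (0, 1)).2 - (L (0, 1)).1 * (L (1, 0)).2 := by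
  rw [← LinearMap.det_toMatrix (Module.Basis.finTwoProd R), Matrix.det_fin_two]
  simp [LinearMap.toMatrix_apply]

section ScaledCurve

variable {𝕜 F : Type*} [NontriviallyNormedField 𝕜] [NormedAddCommGroup F] [NormedSpace 𝕜 F]
  {g : 𝕜 → F} {g' : F} {y : 𝕜}

theorem HasDerivAt.hasFDerivAt_snd_smul_comp_fst (hg : HasDerivAt g g' y) (x : 𝕜) :
    HasFDerivAt (fun p : 𝕜 × 𝕜 => p.2 • g p.1)
      (x • (ContinuousLinearMap.fst 𝕜 𝕜 𝕜).smulRight g'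
        + (ContinuousLinearMap.snd 𝕜 𝕜 𝕜).smulRight (g y)) (y, x) := by
  have hgfst : HasFDerivAt (fun p : 𝕜 × 𝕜 => g p.1)
      ((ContinuousLinearMap.fst 𝕜 𝕜 𝕜).smulRight g') (y, x) := by
    refine (hg.hasFDerivAt.comp (f := Prod.fst) (y, x) hasFDerivAt_fst).congr_fderiv ?_
    ext <;> simp
  exact hasFDerivAt_snd.smul hgfst

theorem HasDerivAt.det_fderiv_snd_smul_comp_fst {g : 𝕜 → 𝕜 × 𝕜} {g' : 𝕜 × 𝕜}
    (hg : HasDerivAt g g' y) (x : 𝕜) :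
    LinearMap.det (fderiv 𝕜 (fun p : 𝕜 × 𝕜 => p.2 • g p.1) (y, x) : (𝕜 × 𝕜) →ₗ[𝕜] (𝕜 × 𝕜)) =
      x * (g'.1 * (g y).2 - (g y).1 * g'.2) := by
  rw [(hg.hasFDerivAt_snd_smul_comp_fst x).fderiv, LinearMap.det_prod_self_eq]
  simp only [ContinuousLinearMap.toLinearMap_add, ContinuousLinearMap.toLinearMap_smul,
    ContinuousLinearMap.coe_smulRight, ContinuousLinearMap.coe_fst, ContinuousLinearMap.coe_snd,
    LinearMap.add_apply, LinearMap.smul_apply, LinearMap.coe_smulRight, LinearMap.fst_apply,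
    LinearMap.snd_apply, one_smul, zero_smul, add_zero, zero_add, smul_zero, Prod.smul_fst,
    Prod.smul_snd, smul_eq_mul]
  ring

end ScaledCurve

noncomputable def logOsc (a ω ρ η t : ℝ) : ℝ := a * t ^ ρ * cos (ω * log (1 / t) + η)

noncomputable def logOscDeriv (a ω ρ η t : ℝ) : ℝ :=
  a * t ^ (ρ - 1) * (ρ * cos (ω * log (1 / t) + η) + ω * sin (ω * log (1 / t) + η))

theorem hasDerivAt_logOsc (a ω ρ η : ℝ) {y : ℝ} (hy : y ≠ 0) :
    HasDerivAt (logOsc a ω ρ η) (logOscDeriv a ω ρ η y) y := by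
  have hlog : HasDerivAt (fun t => log (1 / t)) (-y⁻¹) y := by
    simp only [one_div, log_inv]
    exact (hasDerivAt_log hy).neg
  have hphase := (hlog.const_mul ω).add_const η
  refine (((hasDerivAt_rpow_const (Or.inl hy)).const_mul a).mul hphase.cos).congr_deriv ?_
  rw [logOscDeriv, rpow_sub_one hy]
  field_simp

theorem logOscDeriv_mul_logOsc_sub_logOsc_mul_logOscDeriv (a a₁ ω ρ η η₁ : ℝ) {y : ℝ}
    (hy : 0 < y) :
    logOscDeriv a ω ρ η y * logOsc a₁ ω ρ η₁ y - logOsc a ω ρ η y * logOscDeriv a₁ ω ρ η₁ y =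
      ω * a * a₁ * y ^ (2 * ρ - 1) * sin (η - η₁) := by
  set θ := ω * log (1 / y)
  have hsin : sin (η - η₁) = sin (θ + η) * cos (θ + η₁) - cos (θ + η) * sin (θ + η₁) := by
    rw [← sin_sub]
    ring_nf
  have hpow : y ^ (2 * ρ - 1) = y ^ (ρ - 1) * y ^ ρ := by
    rw [← rpow_add hy]
    ring_nf
  rw [logOscDeriv, logOscDeriv, logOsc, logOsc, hsin, hpow]
  ring

/-- The leading part of the Shilnikov return map is differentiable at every point with
    `y > 0`, and its Jacobian determinant equals `ω A A₁ x y^{2ρ-1} sin(η - η₁)`. -/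
theorem stmt7 (A A₁ ω ρ η η₁ : ℝ)
    (F : ℝ × ℝ → ℝ × ℝ)
    (hF : F = fun p : ℝ × ℝ =>
      (A * p.2 * p.1 ^ ρ * Real.cos (ω * Real.log (1 / p.1) + η),
       A₁ * p.2 * p.1 ^ ρ * Real.cos (ω * Real.log (1 / p.1) + η₁))) :
    ∀ y x : ℝ, 0 < y →
      DifferentiableAt ℝ F (y, x) ∧
      LinearMap.det ((fderiv ℝ F (y, x)) : (ℝ × ℝ) →ₗ[ℝ] (ℝ × ℝ)) =
        ω * A * A₁ * x * y ^ (2 * ρ - 1) * Real.sin (η - η₁) := by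
  intro y x hy
  have hF_smul : F = fun p : ℝ × ℝ => p.2 • (logOsc A ω ρ η p.1, logOsc A₁ ω ρ η₁ p.1) := by
    rw [hF]
    funext p
    simp only [logOsc, Prod.smul_mk, smul_eq_mul, Prod.mk.injEq]
    constructor <;> ring
  have hg : HasDerivAt (fun t => (logOsc A ω ρ η t, logOsc A₁ ω ρ η₁ t))
      (logOscDeriv A ω ρ η y, logOscDeriv A₁ ω ρ η₁ y) y :=
    (hasDerivAt_logOsc A ω ρ η hy.ne').prodMk (hasDerivAt_logOsc A₁ ω ρ η₁ hy.ne')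
  rw [hF_smul]
  refine ⟨(hg.hasFDerivAt_snd_smul_comp_fst x).differentiableAt, ?_⟩
  rw [hg.det_fderiv_snd_smul_comp_fst,
    logOscDeriv_mul_logOsc_sub_logOsc_mul_logOscDeriv A A₁ ω ρ η η₁ hy]
  ring
end

section
/- Let A, A₁, ω, ρ, η, η₁ be real numbers with ω > 0, 0 < ρ < 1/2 and A·A₁·sin(η − η₁) ≠ 0, and define F : (0,∞) × ℝ → ℝ² by F(y, x) = (A·x·y^ρ·cos(ω·ln(1/y) + η), A₁·x·y^ρ·cos(ω·ln(1/y) + η₁)). Then for every c > 0 and every K > 0 there exists y₀ > 0 such that for all y ∈ (0, y₀) and all x with |x| ≥ c, the determinant of the derivative of F at (y, x) has absolute value at least K. -/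
/-! The components of `F` are `A x φ_η(y)` and `A₁ x φ_η₁(y)` with
`φ_θ(y) = y^ρ cos(ω log(1/y) + θ)`, so the Jacobian determinant is `A A₁ x` times the Wronskian
`φ_η' φ_η₁ - φ_η φ_η₁'`. In the Wronskian the `ρ`-terms cancel and the `ω`-terms combine into
`ω y^(2ρ-1) sin(η - η₁)`, which blows up as `y → 0⁺` because `2ρ - 1 < 0`. -/

open Real Filter Topology ContinuousLinearMap

lemma LinearMap.det_prod_of_prod {R : Type*} [CommRing R] (f g : R × R →ₗ[R] R) :
    LinearMap.det (f.prod g) = f (1, 0) * g (0, 1) - f (0, 1) * g (1, 0) := by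
  rw [← LinearMap.det_toMatrix (Module.Basis.finTwoProd R), Matrix.det_fin_two]
  simp [LinearMap.toMatrix_apply]

lemma hasFDerivAt_const_mul_snd_mul_comp_fst {𝕜 : Type*} [NontriviallyNormedField 𝕜]
    {φ : 𝕜 → 𝕜} {φ' y : 𝕜} (hφ : HasDerivAt φ φ' y) (a x : 𝕜) :
    HasFDerivAt (fun p : 𝕜 × 𝕜 => a * p.2 * φ p.1)
      ((a * x * φ') • fst 𝕜 𝕜 𝕜 + (a * φ y) • snd 𝕜 𝕜 𝕜) (y, x) := by
  have h := ((hasFDerivAt_snd (p := (y, x))).mul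
    (hφ.hasFDerivAt.comp (y, x) (hasFDerivAt_fst (𝕜 := 𝕜) (p := (y, x))))).const_mul a
  simp_rw [mul_assoc a]
  refine h.congr_fderiv ?_
  ext <;> simp

lemma hasDerivAt_rpow_mul_cos_log_inv {ρ ω θ t : ℝ} (ht : 0 < t) :
    HasDerivAt (fun s => s ^ ρ * cos (ω * log (1 / s) + θ))
      (t ^ (ρ - 1) * (ρ * cos (ω * log (1 / t) + θ) + ω * sin (ω * log (1 / t) + θ))) t := by
  have hlog : HasDerivAt (fun s => ω * log (1 / s) + θ) (-(ω / t)) t := by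
    simp only [one_div, log_inv]
    exact (((hasDerivAt_log ht.ne').neg.const_mul ω).add_const θ).congr_deriv (by ring)
  refine ((hasDerivAt_rpow_const (p := ρ) (Or.inl ht.ne')).mul hlog.cos).congr_deriv ?_
  rw [rpow_sub ht, rpow_one]
  field_simp

lemma rpow_mul_cos_wronskian (ρ ω η η₁ u : ℝ) {t : ℝ} (ht : 0 < t) :
    t ^ (ρ - 1) * (ρ * cos (u + η) + ω * sin (u + η)) * (t ^ ρ * cos (u + η₁)) -
      t ^ ρ * cos (u + η) * (t ^ (ρ - 1) * (ρ * cos (u + η₁) + ω * sin (u + η₁))) =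
      ω * t ^ (2 * ρ - 1) * sin (η - η₁) := by
  have hsin : sin (η - η₁) = sin (u + η) * cos (u + η₁) - cos (u + η) * sin (u + η₁) := by
    rw [← sin_sub]; ring_nf
  rw [hsin, show 2 * ρ - 1 = ρ + (ρ - 1) by ring, rpow_add ht]
  ring

lemma eventually_le_mul_rpow_nhdsGT_zero {C e : ℝ} (hC : 0 < C) (he : e < 0) (K : ℝ) :
    ∀ᶠ y in 𝓝[>] 0, K ≤ C * y ^ e :=
  ((tendsto_rpow_neg_nhdsGT_zero he).const_mul_atTop hC).eventually_ge_atTop K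

lemma det_fderiv_mul_rpow_mul_cos_log_inv (A A₁ ω ρ η η₁ : ℝ) {y : ℝ} (hy : 0 < y) (x : ℝ) :
    LinearMap.det ((fderiv ℝ (fun p : ℝ × ℝ =>
      (A * p.2 * p.1 ^ ρ * cos (ω * log (1 / p.1) + η),
       A₁ * p.2 * p.1 ^ ρ * cos (ω * log (1 / p.1) + η₁))) (y, x)) : ℝ × ℝ →ₗ[ℝ] ℝ × ℝ) =
      A * A₁ * x * (ω * y ^ (2 * ρ - 1) * sin (η - η₁)) := by
  simp_rw [mul_assoc _ (_ ^ ρ)]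
  rw [((hasFDerivAt_const_mul_snd_mul_comp_fst (hasDerivAt_rpow_mul_cos_log_inv hy) A x).prodMk
    (hasFDerivAt_const_mul_snd_mul_comp_fst (hasDerivAt_rpow_mul_cos_log_inv hy) A₁ x)).fderiv,
    coe_prod, LinearMap.det_prod_of_prod, ← rpow_mul_cos_wronskian ρ ω η η₁ _ hy]
  simp only [toLinearMap_add, toLinearMap_smul, coe_fst, coe_snd, LinearMap.add_apply,
    LinearMap.smul_apply, LinearMap.fst_apply, LinearMap.snd_apply, smul_eq_mul, mul_one,
    mul_zero, add_zero, zero_add]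
  ring

theorem stmt8_general (A A₁ ω ρ η η₁ : ℝ) (hω : 0 < ω) (hρ : ρ < 1 / 2)
    (hnd : A * A₁ * Real.sin (η - η₁) ≠ 0)
    (F : ℝ × ℝ → ℝ × ℝ)
    (hF : F = fun p : ℝ × ℝ =>
      (A * p.2 * p.1 ^ ρ * Real.cos (ω * Real.log (1 / p.1) + η),
       A₁ * p.2 * p.1 ^ ρ * Real.cos (ω * Real.log (1 / p.1) + η₁))) :
    ∀ c > (0 : ℝ), ∀ K > (0 : ℝ), ∃ y₀ > (0 : ℝ), ∀ y ∈ Set.Ioo (0 : ℝ) y₀, ∀ x : ℝ,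
      c ≤ |x| →
      K ≤ |LinearMap.det ((fderiv ℝ F (y, x)) : (ℝ × ℝ) →ₗ[ℝ] (ℝ × ℝ))| := by
  intro c hc K _
  have hC : 0 < |A * A₁ * sin (η - η₁)| * ω * c := by positivity
  obtain ⟨y₀, hy₀, hK⟩ := (nhdsGT_basis 0).eventually_iff.mp
    (eventually_le_mul_rpow_nhdsGT_zero hC (by linarith : 2 * ρ - 1 < 0) K)
  refine ⟨y₀, hy₀, fun y hy x hx => ?_⟩
  have hy_rpow : 0 < y ^ (2 * ρ - 1) := rpow_pos_of_pos hy.1 _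
  calc K ≤ |A * A₁ * sin (η - η₁)| * ω * c * y ^ (2 * ρ - 1) := hK hy
    _ ≤ |A * A₁ * sin (η - η₁)| * ω * |x| * y ^ (2 * ρ - 1) := by gcongr
    _ = _ := by
      rw [hF, det_fderiv_mul_rpow_mul_cos_log_inv A A₁ ω ρ η η₁ hy.1]
      simp only [abs_mul, abs_of_pos hω, abs_of_pos hy_rpow]
      ring

/-- Area expansion: under the non-degeneracy condition `A A₁ sin(η - η₁) ≠ 0` and
    `0 < ρ < 1/2`, the Jacobian determinant of the leading part of the return map is
    arbitrarily large for small `y > 0` and `|x|` bounded away from zero. -/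
theorem stmt8 (A A₁ ω ρ η η₁ : ℝ) (hω : 0 < ω) (hρ0 : 0 < ρ) (hρ : ρ < 1 / 2)
    (hnd : A * A₁ * Real.sin (η - η₁) ≠ 0)
    (F : ℝ × ℝ → ℝ × ℝ)
    (hF : F = fun p : ℝ × ℝ =>
      (A * p.2 * p.1 ^ ρ * Real.cos (ω * Real.log (1 / p.1) + η),
       A₁ * p.2 * p.1 ^ ρ * Real.cos (ω * Real.log (1 / p.1) + η₁))) :
    ∀ c > (0 : ℝ), ∀ K > (0 : ℝ), ∃ y₀ > (0 : ℝ), ∀ y ∈ Set.Ioo (0 : ℝ) y₀, ∀ x : ℝ,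
      c ≤ |x| →
      K ≤ |LinearMap.det ((fderiv ℝ F (y, x)) : (ℝ × ℝ) →ₗ[ℝ] (ℝ × ℝ))| :=
  stmt8_general A A₁ ω ρ η η₁ hω hρ hnd F hF
end

section
/- Let A > 0, ω > 0, ρ ∈ (0,1), η ∈ ℝ, and define f : (0,∞) → ℝ by f(y) = A·y^ρ·cos(ω·ln(1/y) + η). Then for all 0 < a ≤ b with ω·ln(b/a) ≥ 2π, the image f([a, b]) contains the interval [−A·a^ρ, A·a^ρ]. -/
/-!
Over `[a, b]` the phase `φ y = ω log(1/y) + η` takes every value in `[φ b, φ a]`, an interval of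
length `ω log(b/a) ≥ 2π`, so it hits a point where `cos φ = 1` and one where `cos φ = -1`. There
`f` equals `± A y^ρ`, whose modulus is at least `A a^ρ`; the intermediate value theorem for the
continuous `f` fills in `[-A a^ρ, A a^ρ]`.
-/

open Real Set

theorem Real.exists_mem_Ico_cos_eq (θ x : ℝ) : ∃ t ∈ Ico θ (θ + 2 * π), cos t = cos x :=
  ⟨toIcoMod two_pi_pos θ x, toIcoMod_mem_Ico two_pi_pos θ x, by
    simpa only [toIcoMod_add_toIcoDiv_zsmul] using
      (cos_periodic.zsmul (toIcoDiv two_pi_pos θ x) (toIcoMod two_pi_pos θ x)).symm⟩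

theorem Icc_neg_subset_image_of_mul_cos {f g φ : ℝ → ℝ} {s : Set ℝ} {m θ : ℝ}
    (hs : IsPreconnected s) (hg : ContinuousOn g s) (hφ : ContinuousOn φ s)
    (hf : EqOn f (fun y ↦ g y * cos (φ y)) s) (hm : ∀ y ∈ s, m ≤ g y)
    (hθ : Icc θ (θ + 2 * π) ⊆ φ '' s) : Icc (-m) m ⊆ f '' s := by
  have hcont : ContinuousOn f s := (hg.mul (continuous_cos.comp_continuousOn hφ)).congr hf
  obtain ⟨tUp, htUp, hcosUp⟩ := exists_mem_Ico_cos_eq θ 0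
  obtain ⟨tDown, htDown, hcosDown⟩ := exists_mem_Ico_cos_eq θ π
  obtain ⟨yUp, hyUp, rfl⟩ := hθ (Ico_subset_Icc_self htUp)
  obtain ⟨yDown, hyDown, rfl⟩ := hθ (Ico_subset_Icc_self htDown)
  have hfUp : m ≤ f yUp := by simpa [hf hyUp, hcosUp] using hm yUp hyUp
  have hfDown : f yDown ≤ -m := by simpa [hf hyDown, hcosDown] using hm yDown hyDown
  exact (Icc_subset_Icc hfDown hfUp).trans (hs.intermediate_value hyDown hyUp hcont)

theorem stmt12_general (A ω ρ η : ℝ) (hA : 0 < A) (hρ0 : 0 < ρ)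
    (f : ℝ → ℝ)
    (hf : ∀ y ∈ Set.Ioi (0 : ℝ),
      f y = A * y ^ ρ * Real.cos (ω * Real.log (1 / y) + η)) :
    ∀ a b : ℝ, 0 < a → a ≤ b → 2 * Real.pi ≤ ω * Real.log (b / a) →
      Set.Icc (-(A * a ^ ρ)) (A * a ^ ρ) ⊆ f '' Set.Icc a b := by
  intro a b ha hab hperiod
  have hpos : ∀ y ∈ Icc a b, 0 < y := fun y hy ↦ ha.trans_le hy.1
  set φ : ℝ → ℝ := fun y ↦ ω * log (1 / y) + η
  have hφ : ContinuousOn φ (Icc a b) :=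
    ((continuousOn_const.div continuousOn_id fun y hy ↦ (hpos y hy).ne').log
      fun y hy ↦ (one_div_pos.2 (hpos y hy)).ne').const_smul ω |>.add continuousOn_const
  have hsweep : φ b + 2 * π ≤ φ a := by
    have : φ a - φ b = ω * log (b / a) := by
      simp only [φ, one_div, log_inv, log_div (hpos b ⟨hab, le_rfl⟩).ne' ha.ne']
      ring
    linarith
  refine Icc_neg_subset_image_of_mul_cos isPreconnected_Icc
    (continuousOn_const.mul (continuousOn_id.rpow_const fun _ _ ↦ Or.inr hρ0.le)) hφ
    (fun y hy ↦ hf y (hpos y hy)) (fun y hy ↦ ?_) ((Icc_subset_Icc_right hsweep).trans ?_)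
  · exact mul_le_mul_of_nonneg_left (rpow_le_rpow ha.le hy.1 hρ0.le) hA.le
  · exact intermediate_value_Icc' hab hφ

/-- Covering property: on any interval `[a, b]` over which the phase sweeps at least a
    full period (`ω ln(b/a) ≥ 2π`), the image of `f(y) = A y^ρ cos(ω ln(1/y) + η)`
    contains `[-A a^ρ, A a^ρ]`. -/
theorem stmt12 (A ω ρ η : ℝ) (hA : 0 < A) (hω : 0 < ω) (hρ0 : 0 < ρ) (hρ1 : ρ < 1)
    (f : ℝ → ℝ)
    (hf : ∀ y ∈ Set.Ioi (0 : ℝ),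
      f y = A * y ^ ρ * Real.cos (ω * Real.log (1 / y) + η)) :
    ∀ a b : ℝ, 0 < a → a ≤ b → 2 * Real.pi ≤ ω * Real.log (b / a) →
      Set.Icc (-(A * a ^ ρ)) (A * a ^ ρ) ⊆ f '' Set.Icc a b :=
  stmt12_general A ω ρ η hA hρ0 f hf
end

section
/- Let A > 0, ω > 0, ρ ∈ (0,1), η ∈ ℝ, define f : (0,∞) → ℝ by f(y) = A·y^ρ·cos(ω·ln(1/y) + η), and for each integer k set a_k = exp((2η − (2k+1)π)/(2ω)). Then for every ρ' ∈ (ρ, 1) there exists an integer K such that for all integers i, j with i ≥ K and j ≥ ρ'·i, the interval [a_{2j+1}, a_{2j−1}] is contained in f([a_{2i+1}, a_{2i−1}]). -/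
/-!
Parametrise `(0, ∞)` by the phase: at `phasePoint ω η θ = exp ((η - θ) / ω)` the argument of the
cosine is exactly `θ`. The strip `[a_{2i+1}, a_{2i-1}]` is the phase range
`[2πi - π/2, 2πi + 3π/2]`; `f` vanishes at its left end and equals `A · exp (ρ (η - 2πi) / ω)` at
phase `2πi`. By the intermediate value theorem `f` covers everything in between, in particular
the strip `j`, which lies below `a_{2j-1} = exp ((η - 2πj + π/2) / ω)`. Comparing exponents, this
holds as soon as `2π (ρ' - ρ) i` exceeds a constant, since `j ≥ ρ' i`.
-/

open Real Set

noncomputable def phasePoint (ω η θ : ℝ) : ℝ := exp ((η - θ) / ω)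

lemma phasePoint_pos (ω η θ : ℝ) : 0 < phasePoint ω η θ := exp_pos _

lemma phasePoint_antitone {ω : ℝ} (hω : 0 < ω) (η : ℝ) : Antitone (phasePoint ω η) :=
  fun _ _ h => exp_le_exp.mpr (div_le_div_of_nonneg_right (by linarith) hω.le)

lemma phase_phasePoint {ω : ℝ} (hω : ω ≠ 0) (η θ : ℝ) :
    ω * log (1 / phasePoint ω η θ) + η = θ := by
  rw [phasePoint, one_div, log_inv, log_exp]
  field_simp
  ring

lemma phasePoint_rpow (ω η θ ρ : ℝ) : phasePoint ω η θ ^ ρ = exp (ρ * (η - θ) / ω) := by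
  rw [phasePoint, ← exp_mul]
  ring_nf

lemma apply_phasePoint {f : ℝ → ℝ} {A ω ρ η : ℝ} (hω : ω ≠ 0)
    (hf : ∀ y ∈ Ioi (0 : ℝ), f y = A * y ^ ρ * cos (ω * log (1 / y) + η)) (θ : ℝ) :
    f (phasePoint ω η θ) = A * phasePoint ω η θ ^ ρ * cos θ := by
  rw [hf _ (phasePoint_pos ω η θ), phase_phasePoint hω]

lemma continuousOn_Ioi_of_eq_rpow_mul_cos {f : ℝ → ℝ} {A ω ρ η : ℝ}
    (hf : ∀ y ∈ Ioi (0 : ℝ), f y = A * y ^ ρ * cos (ω * log (1 / y) + η)) :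
    ContinuousOn f (Ioi 0) := by
  refine ContinuousOn.congr ?_ hf
  have hne : ∀ y ∈ Ioi (0 : ℝ), y ≠ 0 := fun y hy => (mem_Ioi.mp hy).ne'
  refine (continuousOn_const.mul (continuousOn_id.rpow_const fun y hy => .inl (hne y hy))).mul ?_
  refine continuous_cos.comp_continuousOn ((continuousOn_const.mul ?_).add continuousOn_const)
  exact (continuousOn_const.div continuousOn_id hne).log fun y hy => one_div_ne_zero (hne y hy)

lemma exists_phasePoint_le_mul_phasePoint_rpow {A ω ρ ρ' : ℝ} (hA : 0 < A) (hω : 0 < ω)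
    (hρρ' : ρ < ρ') (η : ℝ) : ∃ K : ℤ, ∀ i j : ℤ, K ≤ i → ρ' * i ≤ j →
      phasePoint ω η (2 * π * j - π / 2) ≤ A * phasePoint ω η (2 * π * i) ^ ρ := by
  have hgap : 0 < 2 * π * (ρ' - ρ) := by have := sub_pos.mpr hρρ'; positivity
  refine ⟨⌈((1 - ρ) * η + π / 2 - ω * log A) / (2 * π * (ρ' - ρ))⌉, fun i j hi hj => ?_⟩
  have hiK : (1 - ρ) * η + π / 2 - ω * log A ≤ 2 * π * (ρ' - ρ) * i := by
    rw [← div_le_iff₀' hgap]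
    exact (Int.le_ceil _).trans (by exact_mod_cast hi)
  have hij : 2 * π * (ρ' * i) ≤ 2 * π * j := by gcongr
  rw [phasePoint_rpow, phasePoint, ← exp_log hA, ← exp_add, exp_le_exp, div_le_iff₀ hω,
    add_mul, div_mul_cancel₀ _ hω.ne']
  linarith

theorem stmt15_general (A ω ρ η : ℝ) (hA : 0 < A) (hω : 0 < ω)
    (f : ℝ → ℝ)
    (hf : ∀ y ∈ Set.Ioi (0 : ℝ),
      f y = A * y ^ ρ * Real.cos (ω * Real.log (1 / y) + η))
    (a : ℤ → ℝ)
    (ha : ∀ k : ℤ, a k = Real.exp ((2 * η - (2 * (k : ℝ) + 1) * Real.pi) / (2 * ω))) :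
    ∀ ρ' : ℝ, ρ < ρ' → ρ' < 1 → ∃ K : ℤ, ∀ i j : ℤ, K ≤ i → ρ' * (i : ℝ) ≤ (j : ℝ) →
      Set.Icc (a (2 * j + 1)) (a (2 * j - 1)) ⊆
        f '' Set.Icc (a (2 * i + 1)) (a (2 * i - 1)) := by
  intro ρ' hρρ' _
  have ha' : ∀ k : ℤ, a k = phasePoint ω η ((2 * k + 1) * π / 2) := fun k => by
    rw [ha, phasePoint]; congr 1; field_simp
  obtain ⟨K, hK⟩ := exists_phasePoint_le_mul_phasePoint_rpow hA hω hρρ' η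
  refine ⟨K, fun i j hi hj => ?_⟩
  have hapos : ∀ k, 0 < a k := fun k => ha' k ▸ phasePoint_pos _ _ _
  set c := phasePoint ω η (2 * π * i)
  have hpc : a (2 * i + 1) ≤ c := by
    rw [ha']; exact phasePoint_antitone hω η (by push_cast; linarith [pi_pos])
  have hcq : c ≤ a (2 * i - 1) := by
    rw [ha']; exact phasePoint_antitone hω η (by push_cast; linarith [pi_pos])
  have hf_left : f (a (2 * i + 1)) = 0 := by
    rw [ha', apply_phasePoint hω.ne' hf, cos_eq_zero_iff.mpr ⟨_, rfl⟩, mul_zero]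
  have hf_peak : f c = A * c ^ ρ := by
    rw [apply_phasePoint hω.ne' hf, (cos_eq_one_iff _).mpr ⟨i, by ring⟩, mul_one]
  have hcont : ContinuousOn f (Icc (a (2 * i + 1)) c) :=
    (continuousOn_Ioi_of_eq_rpow_mul_cos hf).mono fun _ hy => (hapos _).trans_le hy.1
  calc Icc (a (2 * j + 1)) (a (2 * j - 1))
      ⊆ Icc (f (a (2 * i + 1))) (f c) := by
        refine Icc_subset_Icc (hf_left ▸ (hapos _).le) ?_
        have hphase : (2 * ((2 * j - 1 : ℤ) : ℝ) + 1) * π / 2 = 2 * π * j - π / 2 := by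
          push_cast; ring
        rw [hf_peak, ha', hphase]
        exact hK i j hi hj
    _ ⊆ f '' Icc (a (2 * i + 1)) c := intermediate_value_Icc hpc hcont
    _ ⊆ f '' Icc (a (2 * i + 1)) (a (2 * i - 1)) := image_mono (Icc_subset_Icc le_rfl hcq)

/-- Strip covering: with `a_k = exp((2η - (2k+1)π)/(2ω))` the zeros of the oscillatory
    factor, for every `ρ' ∈ (ρ, 1)` and all large `i`, the image under
    `f(y) = A y^ρ cos(ω ln(1/y) + η)` of the strip `[a_{2i+1}, a_{2i-1}]` covers the
    strip `[a_{2j+1}, a_{2j-1}]` whenever `j ≥ ρ' i`. -/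
theorem stmt15 (A ω ρ η : ℝ) (hA : 0 < A) (hω : 0 < ω) (hρ0 : 0 < ρ) (hρ1 : ρ < 1)
    (f : ℝ → ℝ)
    (hf : ∀ y ∈ Set.Ioi (0 : ℝ),
      f y = A * y ^ ρ * Real.cos (ω * Real.log (1 / y) + η))
    (a : ℤ → ℝ)
    (ha : ∀ k : ℤ, a k = Real.exp ((2 * η - (2 * (k : ℝ) + 1) * Real.pi) / (2 * ω))) :
    ∀ ρ' : ℝ, ρ < ρ' → ρ' < 1 → ∃ K : ℤ, ∀ i j : ℤ, K ≤ i → ρ' * (i : ℝ) ≤ (j : ℝ) →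
      Set.Icc (a (2 * j + 1)) (a (2 * j - 1)) ⊆
        f '' Set.Icc (a (2 * i + 1)) (a (2 * i - 1)) :=
  stmt15_general A ω ρ η hA hω f hf a ha
end
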